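/- For all integers n, m with 1 ≤ m ≤ n, there exist matrices A_1,…,A_m ∈ ℝ^{n×n} (not necessarily invertible) and B_1,…,B_m ∈ ℝ^{n×1} such that the associated switched linear control system is controllable, there exists a controllable switching sequence of length (n-m+1)m + m(m-1)/2, and no controllable switching sequence has length strictly smaller than (n-m+1)m + m(m-1)/2. -/

import Mathlib

/-- Reachable space of a discrete-time switched linear control system
`x_k = A_{i_k} x_{k-1} + B_{i_k} u_k` along the switching sequence `π`
(the head of the list is the first applied mode):
`R(ε) = {0}` and `R(π' i) = A_i R(π') + Im(B_i)`. -/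
def reach {n m : ℕ} (A : Fin m → Matrix (Fin n) (Fin n) ℝ) {q : Fin m → ℕ}
    (B : ∀ i, Matrix (Fin n) (Fin (q i)) ℝ) (π : List (Fin m)) :
    Submodule ℝ (Fin n → ℝ) :=
  π.foldl (fun S i =>
    Submodule.map (Matrix.mulVecLin (A i)) S ⊔ LinearMap.range (Matrix.mulVecLin (B i))) ⊥

/-- The subspaces `V_k`: `V_0 = {0}`, `V_1 = Σ_i Im B_i`, and
`V_{k+1} = V_k + Σ_i A_i V_k` for `k ≥ 1`. -/
def Vsp {n m : ℕ} (A : Fin m → Matrix (Fin n) (Fin n) ℝ) {q : Fin m → ℕ}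
    (B : ∀ i, Matrix (Fin n) (Fin (q i)) ℝ) : ℕ → Submodule ℝ (Fin n → ℝ)
  | 0 => ⊥
  | 1 => ⨆ i, LinearMap.range (Matrix.mulVecLin (B i))
  | (k + 2) => Vsp A B (k + 1) ⊔
      ⨆ i, Submodule.map (Matrix.mulVecLin (A i)) (Vsp A B (k + 1))

/-!
The witnesses are permutation matrices with a single input `e₀`, in mode `0`, so every
reachable space is spanned by the coordinate vectors of a set `S` of positions,
which evolves by `S ↦ σₖ S` (together with `0` in mode `0`).

For `m = 1` the single mode rotates all positions and inserts `0`; the bound `n` is the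
dimension count, as every step adds at most one dimension.

For `m = c + 2`, mode `0` inserts at position `0`, modes `1, …, c` carry a point up the chain
`0, 1, …, c` by adjacent swaps, and the last mode rotates the ring `c, c + 1, …, n - 1`. The
potential `∑_{j ∈ S} (min j c + 1) + max_{j ∈ S} (j - c)` grows by at most one per step and
equals `(n - m + 1) m + m (m - 1) / 2` when `S` is everything. The bound is attained by carrying a
point to `c` and rotating, `n - m + 1` times, and then filling the chain from the top down.
-/

open Module Submodule Matrix

section Reach

variable {n m : ℕ} (A : Fin m → Matrix (Fin n) (Fin n) ℝ) {q : Fin m → ℕ}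
  (B : ∀ i, Matrix (Fin n) (Fin (q i)) ℝ)

def controllableLengths : Set ℕ :=
  {ℓ | ∃ π, reach A B π = ⊤ ∧ π.length = ℓ}

theorem reach_append_singleton (π : List (Fin m)) (i : Fin m) :
    reach A B (π ++ [i]) =
      (reach A B π).map (A i).mulVecLin ⊔ LinearMap.range (B i).mulVecLin := by
  simp [reach, List.foldl_append]

theorem finrank_reach_le_sum (π : List (Fin m)) :
    finrank ℝ (reach A B π) ≤ (π.map q).sum := by
  induction π using List.reverseRecOn with
  | nil => exact (finrank_bot ℝ _).le
  | append_singleton π i ih =>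
    rw [reach_append_singleton]
    calc finrank ℝ ↥((reach A B π).map (A i).mulVecLin ⊔ LinearMap.range (B i).mulVecLin)
        ≤ finrank ℝ ↥((reach A B π).map (A i).mulVecLin) +
            finrank ℝ (LinearMap.range (B i).mulVecLin) :=
          Submodule.finrank_add_le_finrank_add_finrank _ _
      _ ≤ finrank ℝ (reach A B π) + q i := by
          gcongr
          · exact Submodule.finrank_map_le _ _
          · simpa using LinearMap.finrank_range_le (B i).mulVecLin
      _ ≤ ((π ++ [i]).map q).sum := by simpa using ih

theorem iUnion_reach_eq_univ_of_reach_eq_top {π : List (Fin m)} (h : reach A B π = ⊤) :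
    ⋃ π, (reach A B π : Set (Fin n → ℝ)) = Set.univ :=
  Set.eq_univ_of_subset (Set.subset_iUnion _ π) (by simp [h])

end Reach

theorem le_length_of_reach_eq_top {n m : ℕ} {A : Fin m → Matrix (Fin n) (Fin n) ℝ}
    {B : Fin m → Matrix (Fin n) (Fin 1) ℝ} {π : List (Fin m)} (h : reach A B π = ⊤) :
    n ≤ π.length := by
  have h_le := finrank_reach_le_sum A B π
  rw [h, finrank_top, Module.finrank_fin_fun] at h_le
  simpa using h_le

theorem Module.Basis.span_image_eq_top_iff {ι R M : Type*} [Ring R] [Nontrivial R]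
    [AddCommGroup M] [Module R M] (b : Basis ι R M) {s : Set ι} :
    span R (b '' s) = ⊤ ↔ s = Set.univ := by
  refine ⟨fun h => Set.eq_univ_of_forall fun j => ?_,
    fun h => by rw [h, Set.image_univ, b.span_eq]⟩
  by_contra hj
  exact b.linearIndependent.notMem_span_image hj (h ▸ mem_top)

theorem range_mulVecLin_replicateCol {n : ℕ} {ι : Type*} [Fintype ι] [Nonempty ι]
    (v : Fin n → ℝ) : LinearMap.range (replicateCol ι v).mulVecLin = ℝ ∙ v := by
  rw [range_mulVecLin, col, transpose_replicateCol]
  exact congrArg _ Set.range_const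

theorem permMatrix_inv_mulVec_single {n : ℕ} (τ : Equiv.Perm (Fin n)) (j : Fin n) :
    τ⁻¹.permMatrix ℝ *ᵥ Pi.single j 1 = Pi.single (τ j) 1 := by
  rw [permMatrix_mulVec, Pi.single_comp_equiv, Equiv.Perm.inv_def, Equiv.symm_symm]

section PermSystem

variable {n m : ℕ} (σ : Fin m → Equiv.Perm (Fin n)) (i₀ : Fin m) (o : Fin n)

def permInput (k : Fin m) : Matrix (Fin n) (Fin 1) ℝ :=
  replicateCol (Fin 1) (if k = i₀ then Pi.single o 1 else 0)

def coordStep (S : Finset (Fin n)) (k : Fin m) : Finset (Fin n) :=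
  S.map (σ k).toEmbedding ∪ if k = i₀ then {o} else ∅

theorem apply_mem_coordStep_iff (S : Finset (Fin n)) (k : Fin m) (x : Fin n) :
    σ k x ∈ coordStep σ i₀ o S k ↔ x ∈ S ∨ k = i₀ ∧ σ k x = o := by
  rw [coordStep, Finset.mem_union, ← Equiv.coe_toEmbedding, Finset.mem_map']
  split_ifs <;> simp [*]

theorem coordStep_of_ne {k : Fin m} (hk : k ≠ i₀) (S : Finset (Fin n)) :
    coordStep σ i₀ o S k = S.map (σ k).toEmbedding := by
  simp [coordStep, hk]

theorem map_span_sup_range_permInput (S : Finset (Fin n)) (k : Fin m) :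
    (span ℝ (Pi.basisFun ℝ (Fin n) '' S)).map ((σ k)⁻¹.permMatrix ℝ).mulVecLin ⊔
        LinearMap.range (permInput i₀ o k).mulVecLin =
      span ℝ (Pi.basisFun ℝ (Fin n) '' coordStep σ i₀ o S k) := by
  rw [coordStep, Finset.coe_union, Set.image_union, span_union, map_span]
  congr 1
  · rw [Finset.coe_map, Set.image_image, Set.image_image]
    congr 1
    exact Set.image_congr fun j _ => by
      simp only [mulVecLin_apply, Pi.basisFun_apply, permMatrix_inv_mulVec_single,
        Equiv.coe_toEmbedding]
  · rw [permInput, range_mulVecLin_replicateCol]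
    split_ifs <;> simp

theorem reach_permSystem (π : List (Fin m)) :
    reach (fun k => (σ k)⁻¹.permMatrix ℝ) (permInput i₀ o) π =
      span ℝ (Pi.basisFun ℝ (Fin n) '' ↑(π.foldl (coordStep σ i₀ o) ∅)) := by
  refine Eq.trans ?_ (List.foldl_hom
    (fun S : Finset (Fin n) => span ℝ (Pi.basisFun ℝ (Fin n) '' ↑S))
    (g₂ := fun V k => V.map ((σ k)⁻¹.permMatrix ℝ).mulVecLin ⊔
      LinearMap.range (permInput i₀ o k).mulVecLin) (map_span_sup_range_permInput σ i₀ o))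
  simp [reach]

theorem reach_permSystem_eq_top_iff (π : List (Fin m)) :
    reach (fun k => (σ k)⁻¹.permMatrix ℝ) (permInput i₀ o) π = ⊤ ↔
      π.foldl (coordStep σ i₀ o) ∅ = Finset.univ := by
  rw [reach_permSystem, Basis.span_image_eq_top_iff, Finset.coe_eq_univ]

end PermSystem

section Rotation

variable {n : ℕ} (hn : 0 < n)

theorem val_finRotate (j : Fin n) :
    (finRotate n j : ℕ) = if (j : ℕ) + 1 = n then 0 else (j : ℕ) + 1 := by
  rcases n with _ | d
  · exact j.elim0
  · rw [coe_finRotate]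
    simp [Fin.ext_iff]

theorem foldl_coordStep_finRotate_replicate {t : ℕ} (ht : t ≤ n) :
    (List.replicate t (0 : Fin 1)).foldl (coordStep (fun _ => finRotate n) 0 ⟨0, hn⟩) ∅ =
      ({j | (j : ℕ) < t} : Finset (Fin n)) := by
  induction t with
  | zero => simp
  | succ t ih =>
    rw [List.replicate_succ', List.foldl_append, ih (by omega)]
    ext j
    obtain ⟨x, rfl⟩ := (finRotate n).surjective j
    rw [List.foldl_cons, List.foldl_nil, apply_mem_coordStep_iff]
    simp only [Finset.mem_filter_univ, Fin.ext_iff, val_finRotate, true_and]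
    split_ifs <;> simp

theorem isLeast_controllableLengths_finRotate :
    IsLeast (controllableLengths (fun _ : Fin 1 => (finRotate n)⁻¹.permMatrix ℝ)
      (permInput 0 ⟨0, hn⟩)) n := by
  refine ⟨⟨List.replicate n (0 : Fin 1), ?_, List.length_replicate⟩, ?_⟩
  · rw [reach_permSystem_eq_top_iff, foldl_coordStep_finRotate_replicate hn le_rfl]
    ext j
    simp
  · rintro ℓ ⟨π, hπ, rfl⟩
    exact le_length_of_reach_eq_top hπ

end Rotation

theorem sum_le_sum_add_one_of_forall_ne {ι : Type*} {s : Finset ι} {f g : ι → ℕ} (a : ι)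
    (hf : ∀ i ∈ s, i ≠ a → f i ≤ g i) (ha : f a ≤ g a + 1) :
    ∑ i ∈ s, f i ≤ ∑ i ∈ s, g i + 1 := by
  classical
  by_cases has : a ∈ s
  · rw [← Finset.add_sum_erase s f has, ← Finset.add_sum_erase s g has]
    have := Finset.sum_le_sum fun i hi =>
      hf i (Finset.mem_of_mem_erase hi) (Finset.ne_of_mem_erase hi)
    omega
  · exact (Finset.sum_le_sum fun i hi => hf i hi (ne_of_mem_of_not_mem hi has)).trans
      (Nat.le_succ _)

theorem sum_insert_le_add {ι : Type*} [DecidableEq ι] (s : Finset ι) (f : ι → ℕ) (a : ι) :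
    ∑ i ∈ insert a s, f i ≤ f a + ∑ i ∈ s, f i := by
  by_cases has : a ∈ s
  · rw [Finset.insert_eq_of_mem has]
    exact Nat.le_add_left _ _
  · rw [Finset.sum_insert has]

theorem sup_le_sup_add_one {ι : Type*} {s : Finset ι} {f g : ι → ℕ}
    (h : ∀ i ∈ s, f i ≤ g i + 1) : s.sup f ≤ s.sup g + 1 :=
  Finset.sup_le fun i hi => (h i hi).trans (Nat.add_le_add_right (Finset.le_sup hi) 1)

theorem foldl_le_add_length {α β : Type*} (f : α → β → α) (V : α → ℕ)
    (hf : ∀ a b, V (f a b) ≤ V a + 1) (l : List β) (a : α) :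
    V (l.foldl f a) ≤ V a + l.length := by
  induction l generalizing a with
  | nil => simp
  | cons b l ih =>
    have := ih (f a b)
    have := hf a b
    rw [List.foldl_cons, List.length_cons]
    omega

section Potential

variable {n : ℕ}

def switchPotential (c : ℕ) (S : Finset (Fin n)) : ℕ :=
  ∑ j ∈ S, (min (j : ℕ) c + 1) + S.sup fun j => (j : ℕ) - c

theorem switchPotential_map (c : ℕ) (S : Finset (Fin n)) (e : Fin n ↪ Fin n) :
    switchPotential c (S.map e) =
      ∑ j ∈ S, (min (e j : ℕ) c + 1) + S.sup fun j => (e j : ℕ) - c := by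
  rw [switchPotential, Finset.sum_map, Finset.sup_map]
  rfl

theorem switchPotential_insert (c : ℕ) (S : Finset (Fin n)) (o : Fin n) (ho : (o : ℕ) = 0) :
    switchPotential c (insert o S) ≤ switchPotential c S + 1 := by
  have hsum := sum_insert_le_add S (fun j : Fin n => min (j : ℕ) c + 1) o
  rw [switchPotential, switchPotential, Finset.sup_insert, ho, Nat.zero_sub, Nat.zero_max]
  simp only [ho, Nat.zero_min, zero_add] at hsum
  omega

theorem switchPotential_univ {c : ℕ} (hcn : c + 2 ≤ n) :
    switchPotential c (Finset.univ : Finset (Fin n)) =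
      (n - (c + 2) + 1) * (c + 2) + (c + 2).choose 2 := by
  obtain ⟨d, rfl⟩ : ∃ d, n = c + (d + 2) := ⟨n - (c + 2), by omega⟩
  have hsum : ∑ j : Fin (c + (d + 2)), (min (j : ℕ) c + 1) =
      (c + 1).choose 2 + (d + 2) * (c + 1) := by
    have hlow : ∑ j ∈ Finset.range c, (min j c + 1) = (c + 1).choose 2 := by
      rw [Nat.choose_two_right, ← Finset.sum_range_id, Finset.sum_range_succ', add_zero]
      exact Finset.sum_congr rfl fun j hj => by simp at hj; omega
    rw [Fin.sum_univ_eq_sum_range (fun j => min j c + 1), Finset.sum_range_add, hlow]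
    simp
  have hsup : (Finset.univ.sup fun j : Fin (c + (d + 2)) => (j : ℕ) - c) = d + 1 :=
    le_antisymm (Finset.sup_le fun j _ => by omega) <| le_of_eq_of_le (by simp; omega)
      (Finset.le_sup (f := fun j : Fin (c + (d + 2)) => (j : ℕ) - c)
        (Finset.mem_univ ⟨c + d + 1, by omega⟩))
  rw [switchPotential, hsum, hsup, Nat.choose_succ_succ' (c + 1), Nat.choose_one_right,
    show c + (d + 2) - (c + 2) = d by omega]
  ring

end Potential

section Switching

variable {c n : ℕ} (hcn : c + 2 ≤ n)

def switchPerm (k : Fin (c + 2)) : Equiv.Perm (Fin n) :=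
  if k = Fin.last (c + 1) then Fin.cycleIcc ⟨c, by omega⟩ ⟨n - 1, by omega⟩
  else if k = 0 then 1
  else Equiv.swap ⟨k - 1, by omega⟩ ⟨k, by omega⟩

abbrev switchStep : Finset (Fin n) → Fin (c + 2) → Finset (Fin n) :=
  coordStep (switchPerm hcn) 0 ⟨0, by omega⟩

theorem val_switchPerm_last (j : Fin n) :
    (switchPerm hcn (Fin.last (c + 1)) j : ℕ) =
      if (j : ℕ) < c then (j : ℕ) else if (j : ℕ) + 1 = n then c else (j : ℕ) + 1 := by
  have : NeZero n := ⟨by omega⟩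
  rw [switchPerm, if_pos rfl]
  split_ifs with hjc hjn
  · rw [Fin.cycleIcc_of_lt (Fin.mk_lt_of_lt_val hjc)]
  · rw [Fin.cycleIcc_of_le_of_le (Fin.le_iff_val_le_val.2 (by simp; omega))
      (Fin.le_iff_val_le_val.2 (by simp; omega)), if_pos (Fin.ext (by simp; omega))]
  · rw [Fin.cycleIcc_of_le_of_le (Fin.le_iff_val_le_val.2 (by simp; omega))
      (Fin.le_iff_val_le_val.2 (by simp; omega)),
      if_neg (fun h => by simp [Fin.ext_iff] at h; omega), Fin.val_add_one_of_lt' (by omega)]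

theorem val_switchPerm_of_ne {k : Fin (c + 2)} (hk0 : k ≠ 0) (hkl : k ≠ Fin.last (c + 1))
    (j : Fin n) :
    (switchPerm hcn k j : ℕ) =
      if (j : ℕ) + 1 = k then (k : ℕ)
      else if (j : ℕ) = k then (k : ℕ) - 1
      else (j : ℕ) := by
  rw [switchPerm, if_neg hkl, if_neg hk0, Equiv.swap_apply_def]
  simp only [Fin.ext_iff, apply_ite Fin.val] at hk0 hkl ⊢
  split_ifs <;> omega

theorem switchStep_zero (S : Finset (Fin n)) : switchStep hcn S 0 = insert ⟨0, by omega⟩ S := by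
  simp [coordStep, switchPerm, Equiv.Perm.one_def, Fin.ext_iff]

theorem switchStep_of_ne {k : Fin (c + 2)} (hk : k ≠ 0) (S : Finset (Fin n)) :
    switchStep hcn S k = S.map (switchPerm hcn k).toEmbedding :=
  coordStep_of_ne _ _ _ hk S

theorem switchPotential_map_switchPerm_last_le (S : Finset (Fin n)) :
    switchPotential c (S.map (switchPerm hcn (Fin.last (c + 1))).toEmbedding) ≤
      switchPotential c S + 1 := by
  rw [switchPotential_map]
  have hsum : ∑ j ∈ S, (min (switchPerm hcn (Fin.last (c + 1)) j : ℕ) c + 1) =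
      ∑ j ∈ S, (min (j : ℕ) c + 1) :=
    Finset.sum_congr rfl fun j _ => by rw [val_switchPerm_last]; split_ifs <;> omega
  have hsup := sup_le_sup_add_one (s := S)
    (f := fun j => (switchPerm hcn (Fin.last (c + 1)) j : ℕ) - c) (g := fun j => (j : ℕ) - c)
    fun j _ => by rw [val_switchPerm_last]; split_ifs <;> omega
  simp only [Equiv.coe_toEmbedding]
  rw [switchPotential]
  omega

theorem switchPotential_map_switchPerm_le {k : Fin (c + 2)} (hk0 : k ≠ 0)
    (hkl : k ≠ Fin.last (c + 1)) (S : Finset (Fin n)) :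
    switchPotential c (S.map (switchPerm hcn k).toEmbedding) ≤ switchPotential c S + 1 := by
  rw [switchPotential_map]
  have hk := k.isLt
  have hk0' : (k : ℕ) ≠ 0 := Fin.val_ne_zero_iff.2 hk0
  have hkl' : (k : ℕ) ≠ c + 1 := Fin.val_ne_iff.2 hkl
  have hsum := sum_le_sum_add_one_of_forall_ne (s := S)
    (f := fun j => min (switchPerm hcn k j : ℕ) c + 1) (g := fun j => min (j : ℕ) c + 1)
    (⟨k - 1, by omega⟩ : Fin n)
    (fun j _ hj => by
      have hj' : (j : ℕ) ≠ k - 1 := fun h => hj (Fin.ext h)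
      rw [val_switchPerm_of_ne hcn hk0 hkl]; split_ifs <;> omega)
    (by rw [val_switchPerm_of_ne hcn hk0 hkl]; split_ifs <;> omega)
  have hsup : (S.sup fun j => (switchPerm hcn k j : ℕ) - c) ≤ S.sup fun j => (j : ℕ) - c :=
    Finset.sup_mono_fun fun j _ => by rw [val_switchPerm_of_ne hcn hk0 hkl]; split_ifs <;> omega
  simp only [Equiv.coe_toEmbedding]
  rw [switchPotential]
  omega

/- An insertion adds a point of weight `1`, a swap moves one point one place up the chain, and a
rotation keeps every weight and raises the displacement term by at most one. -/
theorem switchPotential_switchStep_le (S : Finset (Fin n)) (k : Fin (c + 2)) :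
    switchPotential c (switchStep hcn S k) ≤ switchPotential c S + 1 := by
  by_cases hk0 : k = 0
  · rw [hk0, switchStep_zero]
    exact switchPotential_insert c S _ rfl
  rw [switchStep_of_ne hcn hk0]
  by_cases hkl : k = Fin.last (c + 1)
  · rw [hkl]
    exact switchPotential_map_switchPerm_last_le hcn S
  · exact switchPotential_map_switchPerm_le hcn hk0 hkl S

theorem length_le_of_switchStep_eq_univ {π : List (Fin (c + 2))}
    (hπ : π.foldl (switchStep hcn) ∅ = Finset.univ) :
    (n - (c + 2) + 1) * (c + 2) + (c + 2).choose 2 ≤ π.length := by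
  have := foldl_le_add_length _ _ (switchPotential_switchStep_le hcn) π ∅
  rw [hπ, switchPotential_univ hcn] at this
  simpa [switchPotential] using this

end Switching


section SwitchingWord

def carryWord (c t : ℕ) : List (Fin (c + 2)) := (List.range (t + 1)).map (Fin.ofNat (c + 2))

def blockWord (c i : ℕ) : List (Fin (c + 2)) :=
  (List.replicate i (carryWord c c ++ [Fin.last (c + 1)])).flatten

def tailWord (c : ℕ) : ℕ → List (Fin (c + 2))
  | 0 => []
  | t + 1 => carryWord c t ++ tailWord c t

def switchWord (c n : ℕ) : List (Fin (c + 2)) :=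
  blockWord c (n - (c + 2) + 1) ++ tailWord c (c + 1)

theorem length_switchWord (c n : ℕ) :
    (switchWord c n).length = (n - (c + 2) + 1) * (c + 2) + (c + 2).choose 2 := by
  have htail : ∀ t, (tailWord c t).length = (t + 1).choose 2 := by
    intro t
    induction t with
    | zero => rfl
    | succ t ih => simp [tailWord, carryWord, ih, Nat.choose_succ_succ' (t + 1)]
  simp [switchWord, blockWord, carryWord, htail]

variable {c n : ℕ} (hcn : c + 2 ≤ n)

theorem foldl_switchStep_carryWord {s t : ℕ} (hst : s ≤ t) (htc : t ≤ c) (b : ℕ) :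
    (carryWord c s).foldl (switchStep hcn)
        ({j | t < (j : ℕ) ∧ (j : ℕ) ≤ b} : Finset (Fin n)) =
      ({j | (j : ℕ) = s ∨ t < (j : ℕ) ∧ (j : ℕ) ≤ b} : Finset (Fin n)) := by
  induction s with
  | zero =>
    ext j
    simp [carryWord, switchStep_zero, Fin.ext_iff]
  | succ s ih =>
    have hk0 : Fin.ofNat (c + 2) (s + 1) ≠ 0 := by
      rw [Ne, Fin.ext_iff, Fin.val_ofNat, Nat.mod_eq_of_lt (by omega)]; simp
    have hkl : Fin.ofNat (c + 2) (s + 1) ≠ Fin.last (c + 1) := by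
      rw [Ne, Fin.ext_iff, Fin.val_ofNat, Nat.mod_eq_of_lt (by omega)]; simp; omega
    rw [carryWord, List.range_succ, List.map_append, List.foldl_append, ← carryWord,
      ih (by omega), List.map_singleton, List.foldl_cons, List.foldl_nil, switchStep_of_ne hcn hk0]
    ext j
    obtain ⟨x, rfl⟩ := (switchPerm hcn (Fin.ofNat (c + 2) (s + 1))).surjective j
    rw [Finset.mem_map_equiv, Equiv.symm_apply_apply, Finset.mem_filter_univ,
      Finset.mem_filter_univ, val_switchPerm_of_ne hcn hk0 hkl, Fin.val_ofNat,
      Nat.mod_eq_of_lt (by omega)]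
    split_ifs <;> omega

theorem foldl_switchStep_carryWord_rotate {i : ℕ} (hi : c + i + 1 < n) :
    (carryWord c c ++ [Fin.last (c + 1)]).foldl (switchStep hcn)
        ({j | c < (j : ℕ) ∧ (j : ℕ) ≤ c + i} : Finset (Fin n)) =
      ({j | c < (j : ℕ) ∧ (j : ℕ) ≤ c + i + 1} : Finset (Fin n)) := by
  have hl0 : Fin.last (c + 1) ≠ 0 := Fin.last_pos.ne'
  rw [List.foldl_append, foldl_switchStep_carryWord hcn le_rfl le_rfl, List.foldl_cons,
    List.foldl_nil, switchStep_of_ne hcn hl0]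
  ext j
  obtain ⟨x, rfl⟩ := (switchPerm hcn (Fin.last (c + 1))).surjective j
  rw [Finset.mem_map_equiv, Equiv.symm_apply_apply, Finset.mem_filter_univ,
    Finset.mem_filter_univ, val_switchPerm_last]
  split_ifs <;> omega

theorem foldl_switchStep_blockWord {i : ℕ} (hi : c + i < n) :
    (blockWord c i).foldl (switchStep hcn) ∅ =
      ({j | c < (j : ℕ) ∧ (j : ℕ) ≤ c + i} : Finset (Fin n)) := by
  induction i with
  | zero =>
    ext j
    simp only [blockWord, List.replicate_zero, List.flatten_nil, List.foldl_nil,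
      Finset.notMem_empty, Finset.mem_filter_univ, false_iff]
    omega
  | succ i ih =>
    rw [blockWord, List.replicate_succ', List.flatten_append, List.flatten_singleton,
      List.foldl_append, ← blockWord, ih (by omega),
      foldl_switchStep_carryWord_rotate hcn (by omega), add_assoc]

theorem foldl_switchStep_tailWord {t : ℕ} (ht : t ≤ c + 1) :
    (tailWord c t).foldl (switchStep hcn) ({j | t ≤ (j : ℕ)} : Finset (Fin n)) =
      Finset.univ := by
  induction t with
  | zero =>
    ext j
    simp [tailWord]
  | succ t ih =>
    have hpre : ({j | t + 1 ≤ (j : ℕ)} : Finset (Fin n)) =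
        ({j | t < (j : ℕ) ∧ (j : ℕ) ≤ n} : Finset (Fin n)) := by
      ext j
      simp only [Finset.mem_filter_univ]
      omega
    have hpost : ({j | (j : ℕ) = t ∨ t < (j : ℕ) ∧ (j : ℕ) ≤ n} : Finset (Fin n)) =
        ({j | t ≤ (j : ℕ)} : Finset (Fin n)) := by
      ext j
      simp only [Finset.mem_filter_univ]
      omega
    rw [tailWord, List.foldl_append, hpre, foldl_switchStep_carryWord hcn le_rfl (by omega),
      hpost, ih (by omega)]

theorem foldl_switchStep_switchWord :
    (switchWord c n).foldl (switchStep hcn) ∅ = Finset.univ := by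
  have hmid : ({j | c < (j : ℕ) ∧ (j : ℕ) ≤ c + (n - (c + 2) + 1)} : Finset (Fin n)) =
      ({j | c + 1 ≤ (j : ℕ)} : Finset (Fin n)) := by
    ext j
    simp only [Finset.mem_filter_univ]
    omega
  rw [switchWord, List.foldl_append, foldl_switchStep_blockWord hcn (by omega), hmid,
    foldl_switchStep_tailWord hcn le_rfl]

end SwitchingWord

theorem isLeast_controllableLengths_switchPerm {c n : ℕ} (hcn : c + 2 ≤ n) :
    IsLeast (controllableLengths (fun k => (switchPerm hcn k)⁻¹.permMatrix ℝ)
      (permInput 0 ⟨0, by omega⟩)) ((n - (c + 2) + 1) * (c + 2) + (c + 2).choose 2) := by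
  refine ⟨⟨switchWord c n, ?_, length_switchWord c n⟩, ?_⟩
  · rw [reach_permSystem_eq_top_iff]
    exact foldl_switchStep_switchWord hcn
  · rintro ℓ ⟨π, hπ, rfl⟩
    exact length_le_of_switchStep_eq_univ hcn ((reach_permSystem_eq_top_iff _ _ _ π).1 hπ)

/-- Degenerate case: for `1 ≤ m ≤ n` there is a controllable system (with possibly
singular `A_i`) whose shortest controllable sequences have length exactly
`(n-m+1)m + m(m-1)/2`. -/
theorem stmt18 (n m : ℕ) (hm : 1 ≤ m) (hmn : m ≤ n) :
    ∃ (A : Fin m → Matrix (Fin n) (Fin n) ℝ) (B : Fin m → Matrix (Fin n) (Fin 1) ℝ),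
      (⋃ π : List (Fin m), (reach A B π : Set (Fin n → ℝ))) = Set.univ ∧
      (∃ π : List (Fin m), reach A B π = ⊤ ∧
        π.length = (n - m + 1) * m + m * (m - 1) / 2) ∧
      (∀ π : List (Fin m), reach A B π = ⊤ →
        (n - m + 1) * m + m * (m - 1) / 2 ≤ π.length) := by
  obtain ⟨A, B, hAB⟩ : ∃ (A : Fin m → Matrix (Fin n) (Fin n) ℝ)
      (B : Fin m → Matrix (Fin n) (Fin 1) ℝ),
      IsLeast (controllableLengths A B) ((n - m + 1) * m + m.choose 2) := by
    rcases Nat.lt_or_ge m 2 with h | h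
    · obtain rfl : m = 1 := by omega
      rw [show (n - 1 + 1) * 1 + Nat.choose 1 2 = n by simp; omega]
      exact ⟨_, _, isLeast_controllableLengths_finRotate hmn⟩
    · obtain ⟨c, rfl⟩ := Nat.exists_eq_add_of_le' h
      exact ⟨_, _, isLeast_controllableLengths_switchPerm hmn⟩
  obtain ⟨⟨π, hπ, hlen⟩, hmin⟩ := hAB
  rw [← Nat.choose_two_right]
  exact ⟨A, B, iUnion_reach_eq_univ_of_reach_eq_top A B hπ, ⟨π, hπ, hlen⟩,
    fun π' hπ' => hmin ⟨π', hπ', rfl⟩⟩
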